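/- Let q ∈ L¹(ℝ) be complex-valued, λ ∈ ℂ with Im λ ≥ 0 and λ ≠ 0, and let m : ℝ → ℂ be a bounded measurable function satisfying the Jost integral equation m(x) = 1 + ∫_x^∞ D(t−x,λ) q(t) m(t) dt for all x ∈ ℝ. Then sup_{x∈ℝ} |m(x) − 1| ≤ (‖q‖_{L¹}/|λ|) · exp(‖q‖_{L¹}/|λ|). -/

import Mathlib

/-!
Since `Im λ ≥ 0`, `‖D(y,λ)‖ ≤ 1/|λ| =: k`, so `f = ‖m - 1‖` satisfies the backward Volterra
inequality `f x ≤ k Q + k ∫_x^∞ ‖q‖ f` with `Q = ‖q‖_{L¹}`. Gronwall then gives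
`f x ≤ k Q exp (k R x) ≤ k Q exp (k Q)`, where `R x = ∫_x^∞ ‖q‖`. For Gronwall we bound the
weighted supremum `M = sup f / exp (k R)` by `k Q`, using `k ∫_x^∞ ‖q‖ exp (k R) = exp (k R x) - 1`.
This identity is the fundamental theorem of calculus for `exp ∘ (k R)`, which is absolutely
continuous with derivative `-k ‖q‖ exp (k R)` almost everywhere (Lebesgue differentiation).
-/

open MeasureTheory

/-- The kernel `D(y,λ) = (e^{2iλy} - 1)/(2iλ)` for `y > 0`, extended by `0`. -/
noncomputable def D (lam : ℂ) (y : ℝ) : ℂ :=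
  if 0 < y then (Complex.exp (2 * Complex.I * lam * y) - 1) / (2 * Complex.I * lam) else 0

open Set Filter Topology Real

theorem AbsolutelyContinuousOnInterval.comp_lipschitzOnWith {X Y : Type*} [PseudoMetricSpace X]
    [PseudoMetricSpace Y] {f : ℝ → Y} {φ : Y → X} {K : NNReal} {s : Set Y} {a b : ℝ}
    (hφ : LipschitzOnWith K φ s) (hf : AbsolutelyContinuousOnInterval f a b)
    (hfs : MapsTo f (uIcc a b) s) : AbsolutelyContinuousOnInterval (φ ∘ f) a b := by
  have hK : Tendsto (fun E : ℕ × (ℕ → ℝ × ℝ) ↦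
      K * ∑ i ∈ Finset.range E.1, dist (f (E.2 i).1) (f (E.2 i).2))
      (totalLengthFilter ⊓ 𝓟 (disjWithin a b)) (𝓝 0) := by
    simpa using Tendsto.const_mul (K : ℝ) hf
  refine squeeze_zero' (Eventually.of_forall fun E ↦ Finset.sum_nonneg fun _ _ ↦ dist_nonneg) ?_ hK
  filter_upwards [mem_inf_of_right (mem_principal_self _)] with E hE
  rw [Finset.mul_sum]
  exact Finset.sum_le_sum fun i hi ↦
    hφ.dist_le_mul _ (hfs (hE.1 i hi).1) _ (hfs (hE.1 i hi).2)

theorem AbsolutelyContinuousOnInterval.comp_contDiff {F : Type*} [NormedAddCommGroup F]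
    [NormedSpace ℝ F] {f : ℝ → ℝ} {φ : ℝ → F} {a b : ℝ}
    (hφ : ContDiff ℝ 1 φ) (hf : AbsolutelyContinuousOnInterval f a b) :
    AbsolutelyContinuousOnInterval (φ ∘ f) a b := by
  obtain ⟨C, hC⟩ := hf.exists_bound
  obtain ⟨K, hK⟩ := hφ.contDiffOn.exists_lipschitzOnWith one_ne_zero (convex_closedBall 0 C)
    (isCompact_closedBall 0 C)
  exact hf.comp_lipschitzOnWith hK fun x hx ↦ mem_closedBall_zero_iff.2 (hC x hx)

section

variable {E : Type*} [NormedAddCommGroup E] [NormedSpace ℝ E] {g : ℝ → E}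

theorem intervalIntegral_add_integral_Ioi (hg : Integrable g) (a b : ℝ) :
    (∫ t in a..b, g t) + ∫ t in Ioi b, g t = ∫ t in Ioi a, g t := by
  have split {x y : ℝ} (hxy : x ≤ y) :
      ∫ t in Ioi x, g t = (∫ t in Ioc x y, g t) + ∫ t in Ioi y, g t := by
    rw [← setIntegral_union (Ioc_disjoint_Ioi le_rfl) measurableSet_Ioi hg.integrableOn
      hg.integrableOn, Ioc_union_Ioi_eq_Ioi hxy]
  rcases le_total a b with hab | hba
  · rw [intervalIntegral.integral_of_le hab, split hab]
  · rw [intervalIntegral.integral_of_ge hba, split hba]; abel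

theorem continuous_integral_Ioi (hg : Integrable g) : Continuous fun x ↦ ∫ t in Ioi x, g t := by
  have h : (fun x ↦ ∫ t in Ioi x, g t) = fun x ↦ (∫ t in Ioi 0, g t) - ∫ t in 0..x, g t := by
    ext x; rw [← intervalIntegral_add_integral_Ioi hg 0 x]; abel
  rw [h]
  exact continuous_const.sub (hg.continuous_primitive 0)

theorem tendsto_integral_Ioi_atTop (hg : Integrable g) :
    Tendsto (fun x ↦ ∫ t in Ioi x, g t) atTop (𝓝 0) := by
  have h := (intervalIntegral_tendsto_integral_Ioi 0 hg.integrableOn tendsto_id).const_sub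
    (∫ t in Ioi 0, g t)
  rw [sub_self] at h
  refine h.congr fun x ↦ ?_
  rw [← intervalIntegral_add_integral_Ioi hg 0 x]; simp

end

section

variable {f g : ℝ → ℝ}

theorem integrable_mul_exp_integral_Ioi (hg : Integrable g) (k : ℝ) :
    Integrable fun t ↦ g t * exp (k * ∫ s in Ioi t, g s) := by
  refine hg.mul_bdd (c := exp (|k| * ∫ s, ‖g s‖))
    ((continuous_exp.comp ((continuous_integral_Ioi hg).const_mul k)).aestronglyMeasurable)
    (ae_of_all _ fun t ↦ ?_)
  rw [Real.norm_of_nonneg (exp_pos _).le, exp_le_exp]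
  calc k * ∫ s in Ioi t, g s ≤ |k| * ‖∫ s in Ioi t, g s‖ := by
        rw [← Real.norm_eq_abs, ← norm_mul]; exact Real.le_norm_self _
    _ ≤ |k| * ∫ s, ‖g s‖ := by
        gcongr
        exact (norm_integral_le_integral_norm _).trans
          (setIntegral_le_integral hg.norm (ae_of_all _ fun _ ↦ norm_nonneg _))

theorem intervalIntegral_mul_exp_integral_Ioi (hg : Integrable g) (k a b : ℝ) :
    k * ∫ t in a..b, g t * exp (k * ∫ s in Ioi t, g s) =
      exp (k * ∫ t in Ioi a, g t) - exp (k * ∫ t in Ioi b, g t) := by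
  set w : ℝ → ℝ := fun t ↦ exp (k * ∫ s in Ioi t, g s)
  have hw : w = fun t ↦ exp (k * ((∫ s in Ioi a, g s) - ∫ s in a..t, g s)) := by
    ext t; simp only [w, ← intervalIntegral_add_integral_Ioi hg a t, add_sub_cancel_left]
  have hac : AbsolutelyContinuousOnInterval w a b := by
    rw [hw]
    exact (hg.intervalIntegrable.absolutelyContinuousOnInterval_intervalIntegral
      left_mem_uIcc).comp_contDiff (φ := fun y ↦ exp (k * ((∫ s in Ioi a, g s) - y)))
      (by fun_prop)
  have hderiv : ∀ᵐ t, deriv w t = -(k * (g t * w t)) := by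
    filter_upwards [LocallyIntegrable.ae_hasDerivAt_integral hg.locallyIntegrable] with t ht
    calc deriv w t = deriv (fun t ↦ exp (k * ((∫ s in Ioi a, g s) - ∫ s in a..t, g s))) t := by
          rw [hw]
      _ = exp (k * ((∫ s in Ioi a, g s) - ∫ s in a..t, g s)) * (k * -g t) :=
          (((ht a).const_sub _).const_mul k).exp.deriv
      _ = -(k * (g t * w t)) := by rw [hw]; ring
  have hftc := hac.integral_deriv_eq_sub
  rw [intervalIntegral.integral_congr_ae (hderiv.mono fun t ht _ ↦ ht),
    intervalIntegral.integral_neg, intervalIntegral.integral_const_mul] at hftc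
  linarith

theorem integral_Ioi_mul_exp_integral_Ioi (hg : Integrable g) (k a : ℝ) :
    k * ∫ t in Ioi a, g t * exp (k * ∫ s in Ioi t, g s) =
      exp (k * ∫ t in Ioi a, g t) - 1 := by
  have hlim := ((intervalIntegral_tendsto_integral_Ioi a
    (integrable_mul_exp_integral_Ioi hg k).integrableOn tendsto_id).const_mul k)
  have hlim' : Tendsto (fun b ↦ exp (k * ∫ t in Ioi a, g t) - exp (k * ∫ t in Ioi b, g t))
      atTop (𝓝 (exp (k * ∫ t in Ioi a, g t) - 1)) := by
    simpa using ((tendsto_integral_Ioi_atTop hg).const_mul k).rexp.const_sub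
      (exp (k * ∫ t in Ioi a, g t))
  exact tendsto_nhds_unique hlim
    (hlim'.congr fun b ↦ (intervalIntegral_mul_exp_integral_Ioi hg k a b).symm)

theorem mul_integral_Ioi_le_of_le_mul_exp (hg : Integrable g) (hg0 : ∀ t, 0 ≤ g t) {k : ℝ}
    (hk : 0 ≤ k) (hgf : Integrable fun t ↦ g t * f t) {M : ℝ}
    (hfM : ∀ t, f t ≤ M * exp (k * ∫ s in Ioi t, g s)) (x : ℝ) :
    k * ∫ t in Ioi x, g t * f t ≤ M * (exp (k * ∫ t in Ioi x, g t) - 1) :=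
  calc k * ∫ t in Ioi x, g t * f t
      ≤ k * ∫ t in Ioi x, M * (g t * exp (k * ∫ s in Ioi t, g s)) := by
        refine mul_le_mul_of_nonneg_left (setIntegral_mono hgf.integrableOn
          ((integrable_mul_exp_integral_Ioi hg k).const_mul M).integrableOn fun t ↦ ?_) hk
        rw [mul_left_comm]
        exact mul_le_mul_of_nonneg_left (hfM t) (hg0 t)
    _ = M * (k * ∫ t in Ioi x, g t * exp (k * ∫ s in Ioi t, g s)) := by
        rw [integral_const_mul]; ring
    _ = M * (exp (k * ∫ t in Ioi x, g t) - 1) := by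
        rw [integral_Ioi_mul_exp_integral_Ioi hg]

theorem le_mul_exp_integral_Ioi_of_le_add_integral (hg : Integrable g) (hg0 : ∀ t, 0 ≤ g t)
    {k a C : ℝ} (hk : 0 ≤ k) (hf0 : ∀ t, 0 ≤ f t) (hfC : ∀ t, f t ≤ C)
    (hgf : Integrable fun t ↦ g t * f t) (h : ∀ x, f x ≤ a + k * ∫ t in Ioi x, g t * f t)
    (x : ℝ) : f x ≤ a * exp (k * ∫ t in Ioi x, g t) := by
  have hR0 (t : ℝ) : 0 ≤ ∫ s in Ioi t, g s := setIntegral_nonneg measurableSet_Ioi fun s _ ↦ hg0 s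
  have hRQ (t : ℝ) : ∫ s in Ioi t, g s ≤ ∫ s, g s :=
    setIntegral_le_integral hg (ae_of_all _ hg0)
  set M := ⨆ t, f t / exp (k * ∫ s in Ioi t, g s)
  have hbdd : BddAbove (range fun t ↦ f t / exp (k * ∫ s in Ioi t, g s)) := by
    refine ⟨C, ?_⟩
    rintro _ ⟨t, rfl⟩
    exact (div_le_self (hf0 t) (one_le_exp (mul_nonneg hk (hR0 t)))).trans (hfC t)
  have hfM (t : ℝ) : f t ≤ M * exp (k * ∫ s in Ioi t, g s) :=
    (div_le_iff₀ (exp_pos _)).1 (le_ciSup hbdd t)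
  have hstep (t : ℝ) : f t ≤ a + M * (exp (k * ∫ s in Ioi t, g s) - 1) :=
    (h t).trans ((add_le_add_iff_left a).2 (mul_integral_Ioi_le_of_le_mul_exp hg hg0 hk hgf hfM t))
  have hMa : M ≤ a := by
    by_contra! haM
    have hgap : M ≤ M - (M - a) / exp (k * ∫ s, g s) := ciSup_le fun t ↦
      calc f t / exp (k * ∫ s in Ioi t, g s)
          ≤ (a + M * (exp (k * ∫ s in Ioi t, g s) - 1)) / exp (k * ∫ s in Ioi t, g s) := by
            gcongr; exact hstep t
        _ = M - (M - a) / exp (k * ∫ s in Ioi t, g s) := by field_simp; ring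
        _ ≤ M - (M - a) / exp (k * ∫ s, g s) :=
            sub_le_sub_left (div_le_div_of_nonneg_left (by linarith) (exp_pos _)
              (exp_le_exp.2 (mul_le_mul_of_nonneg_left (hRQ t) hk))) M
    have : 0 < (M - a) / exp (k * ∫ s, g s) := div_pos (by linarith) (exp_pos _)
    linarith
  calc f x ≤ a + M * (exp (k * ∫ t in Ioi x, g t) - 1) := hstep x
    _ ≤ a + a * (exp (k * ∫ t in Ioi x, g t) - 1) := by
        gcongr
        linarith [one_le_exp (mul_nonneg hk (hR0 x))]
    _ = a * exp (k * ∫ t in Ioi x, g t) := by ring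

end

theorem norm_D_le {lam : ℂ} (him : 0 ≤ lam.im) (y : ℝ) : ‖D lam y‖ ≤ ‖lam‖⁻¹ := by
  unfold D
  split_ifs with hy
  · have hexp : ‖Complex.exp (2 * Complex.I * lam * y)‖ ≤ 1 := by
      rw [Complex.norm_exp, Real.exp_le_one_iff]
      simp only [Complex.mul_re, Complex.mul_im, Complex.I_re, Complex.I_im, Complex.ofReal_re,
        Complex.ofReal_im, Complex.re_ofNat, Complex.im_ofNat]
      nlinarith [mul_nonneg him hy.le]
    calc ‖(Complex.exp (2 * Complex.I * lam * y) - 1) / (2 * Complex.I * lam)‖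
        ≤ 2 / (2 * ‖lam‖) := by
          rw [norm_div, norm_mul, norm_mul, Complex.norm_I, Complex.norm_two, mul_one]
          gcongr
          exact (norm_sub_le _ _).trans (by rw [norm_one]; linarith)
      _ = ‖lam‖⁻¹ := by rw [div_mul_eq_div_div, div_self two_ne_zero, one_div]
  · simp

theorem norm_jost_sub_one_le {q m : ℝ → ℂ} {lam : ℂ} (hq : Integrable q) (him : 0 ≤ lam.im)
    (hqm : Integrable fun t ↦ ‖q t‖ * ‖m t - 1‖) {x : ℝ}
    (hx : m x = 1 + ∫ t in Ioi x, D lam (t - x) * q t * m t) :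
    ‖m x - 1‖ ≤ ‖lam‖⁻¹ * (∫ t, ‖q t‖) + ‖lam‖⁻¹ * ∫ t in Ioi x, ‖q t‖ * ‖m t - 1‖ := by
  have hpt : ∀ t, ‖D lam (t - x) * q t * m t‖ ≤ ‖lam‖⁻¹ * (‖q t‖ + ‖q t‖ * ‖m t - 1‖) := by
    intro t
    have hm : ‖m t‖ ≤ 1 + ‖m t - 1‖ := by
      simpa using norm_le_norm_add_norm_sub' (m t) 1
    calc ‖D lam (t - x) * q t * m t‖ = ‖D lam (t - x)‖ * ‖q t‖ * ‖m t‖ := by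
          rw [norm_mul, norm_mul]
      _ ≤ ‖lam‖⁻¹ * ‖q t‖ * (1 + ‖m t - 1‖) := by gcongr; exact norm_D_le him _
      _ = ‖lam‖⁻¹ * (‖q t‖ + ‖q t‖ * ‖m t - 1‖) := by ring
  calc ‖m x - 1‖ = ‖∫ t in Ioi x, D lam (t - x) * q t * m t‖ := by rw [hx, add_sub_cancel_left]
    _ ≤ ∫ t in Ioi x, ‖lam‖⁻¹ * (‖q t‖ + ‖q t‖ * ‖m t - 1‖) :=
        (norm_integral_le_integral_norm _).trans <| integral_mono_of_nonneg
          (ae_of_all _ fun _ ↦ norm_nonneg _)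
          ((hq.norm.add hqm).const_mul _).integrableOn (ae_of_all _ hpt)
    _ = ‖lam‖⁻¹ * (∫ t in Ioi x, ‖q t‖) + ‖lam‖⁻¹ * ∫ t in Ioi x, ‖q t‖ * ‖m t - 1‖ := by
        rw [integral_const_mul, integral_add hq.norm.integrableOn hqm.integrableOn, mul_add]
    _ ≤ _ := by
        gcongr ‖lam‖⁻¹ * ?_ + _
        exact setIntegral_le_integral hq.norm (ae_of_all _ fun _ ↦ norm_nonneg _)

theorem jost_solution_minus_one_bound_general (q : ℝ → ℂ) (hq : Integrable q)
    (lam : ℂ) (him : 0 ≤ lam.im)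
    (m : ℝ → ℂ) (hmeas : Measurable m) (hbd : ∃ C, ∀ x, ‖m x‖ ≤ C)
    (heq : ∀ x, m x = 1 + ∫ t in Set.Ioi x, D lam (t - x) * q t * m t) :
    ∀ x, ‖m x - 1‖ ≤ (∫ t, ‖q t‖) / ‖lam‖ *
      Real.exp ((∫ t, ‖q t‖) / ‖lam‖) := by
  obtain ⟨C, hC⟩ := hbd
  have hfC (t : ℝ) : ‖m t - 1‖ ≤ C + 1 := (norm_sub_le _ _).trans (by simpa using hC t)
  have hqm : Integrable fun t ↦ ‖q t‖ * ‖m t - 1‖ :=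
    hq.norm.mul_bdd (hmeas.sub measurable_const).norm.aestronglyMeasurable
      (ae_of_all _ fun t ↦ by simpa using hfC t)
  intro x
  calc ‖m x - 1‖ ≤ ‖lam‖⁻¹ * (∫ t, ‖q t‖) * exp (‖lam‖⁻¹ * ∫ t in Ioi x, ‖q t‖) :=
        le_mul_exp_integral_Ioi_of_le_add_integral hq.norm (fun _ ↦ norm_nonneg _)
          (inv_nonneg.2 (norm_nonneg lam)) (fun _ ↦ norm_nonneg _) hfC hqm
          (fun _ ↦ norm_jost_sub_one_le hq him hqm (heq _)) x
    _ ≤ ‖lam‖⁻¹ * (∫ t, ‖q t‖) * exp (‖lam‖⁻¹ * ∫ t, ‖q t‖) := by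
        gcongr _ * exp (_ * ?_)
        exact setIntegral_le_integral hq.norm (ae_of_all _ fun _ ↦ norm_nonneg _)
    _ = (∫ t, ‖q t‖) / ‖lam‖ * exp ((∫ t, ‖q t‖) / ‖lam‖) := by rw [inv_mul_eq_div]

theorem jost_solution_minus_one_bound (q : ℝ → ℂ) (hq : Integrable q)
    (lam : ℂ) (him : 0 ≤ lam.im) (hne : lam ≠ 0)
    (m : ℝ → ℂ) (hmeas : Measurable m) (hbd : ∃ C, ∀ x, ‖m x‖ ≤ C)
    (heq : ∀ x, m x = 1 + ∫ t in Set.Ioi x, D lam (t - x) * q t * m t) :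
    ∀ x, ‖m x - 1‖ ≤ (∫ t, ‖q t‖) / ‖lam‖ *
      Real.exp ((∫ t, ‖q t‖) / ‖lam‖) :=
  jost_solution_minus_one_bound_general q hq lam him m hmeas hbd heq
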